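/- arXiv:2205.10495 — 9 statements merged into one kernel-verified Lean document; each statement's English description precedes it below -/
import Mathlib

section
/- Let α > 0, β > 0, c > 0, and y ∈ ℝ, and define f(j) = β|j| + α|j − c| + (1/2)(j − y)² for j ∈ ℝ. If y ≥ α + β + c, then the unique global minimizer of f over ℝ is j* = y − α − β. -/
/-- A case of the closed-form solution Eq. (13) of the scalar subproblem
`min_j β|j| + α|j - c| + (1/2)(j - y)²`: under the stated conditions the unique
global minimizer is `j* = (y - α - β)`. -/
theorem scalar_subproblem_pos_large (α β c y : ℝ) (hα : 0 < α) (hβ : 0 < β)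
    (hc : 0 < c) (hy : α + β + c ≤ y) :
    (∀ j : ℝ,
        β * |(y - α - β)| + α * |(y - α - β) - c| + (1 / 2) * ((y - α - β) - y) ^ 2 ≤
          β * |j| + α * |j - c| + (1 / 2) * (j - y) ^ 2) ∧
      ∀ j : ℝ,
        β * |j| + α * |j - c| + (1 / 2) * (j - y) ^ 2 ≤
            β * |(y - α - β)| + α * |(y - α - β) - c| + (1 / 2) * ((y - α - β) - y) ^ 2 →
          j = (y - α - β) := by
  have h1 : |(y - α - β)| = y - α - β := abs_of_nonneg (by linarith)
  have h2 : |(y - α - β) - c| = (y - α - β) - c := abs_of_nonneg (by linarith)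
  constructor
  · intro j
    rw [h1, h2]
    nlinarith [le_abs_self j, le_abs_self (j - c), sq_nonneg (j - (y - α - β))]
  · intro j hj
    rw [h1, h2] at hj
    nlinarith [le_abs_self j, le_abs_self (j - c), sq_nonneg (j - (y - α - β)),
      sq_abs (j - (y - α - β))]
end

section
/- Let α > 0, β > 0, c > 0, and y ∈ ℝ, and define f(j) = β|j| + α|j − c| + (1/2)(j − y)² for j ∈ ℝ. If 0 < y + α − β < c, then the unique global minimizer of f over ℝ is j* = y + α − β. -/
/-- A case of the closed-form solution Eq. (13) of the scalar subproblem
`min_j β|j| + α|j - c| + (1/2)(j - y)²`: under the stated conditions the unique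
global minimizer is `j* = (y + α - β)`. -/
theorem scalar_subproblem_pos_mid (α β c y : ℝ) (hα : 0 < α) (hβ : 0 < β)
    (hc : 0 < c) (hy1 : 0 < y + α - β) (hy2 : y + α - β < c) :
    (∀ j : ℝ,
        β * |(y + α - β)| + α * |(y + α - β) - c| + (1 / 2) * ((y + α - β) - y) ^ 2 ≤
          β * |j| + α * |j - c| + (1 / 2) * (j - y) ^ 2) ∧
      ∀ j : ℝ,
        β * |j| + α * |j - c| + (1 / 2) * (j - y) ^ 2 ≤
            β * |(y + α - β)| + α * |(y + α - β) - c| + (1 / 2) * ((y + α - β) - y) ^ 2 →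
          j = (y + α - β) := by
  have h1 : |(y + α - β)| = y + α - β := abs_of_pos hy1
  have h2 : |(y + α - β) - c| = -((y + α - β) - c) := abs_of_neg (by linarith)
  have key : ∀ j : ℝ,
      β * |(y + α - β)| + α * |(y + α - β) - c| + (1 / 2) * ((y + α - β) - y) ^ 2
        + (1 / 2) * (j - (y + α - β)) ^ 2 ≤
      β * |j| + α * |j - c| + (1 / 2) * (j - y) ^ 2 := by
    intro j
    have hj1 : j ≤ |j| := le_abs_self j
    have hj2 : -(j - c) ≤ |j - c| := neg_le_abs _
    rw [h1, h2]
    nlinarith [hj1, hj2, sq_nonneg (j - (y + α - β))]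
  constructor
  · intro j
    have := key j
    nlinarith [sq_nonneg (j - (y + α - β))]
  · intro j hj
    have := key j
    have hsq : (j - (y + α - β)) ^ 2 ≤ 0 := by linarith
    have := sq_nonneg (j - (y + α - β))
    have : (j - (y + α - β)) ^ 2 = 0 := le_antisymm hsq this
    have := pow_eq_zero_iff (n := 2) (by norm_num) |>.mp this
    linarith
end

section
/- Let α > 0, β > 0, c > 0, and y ∈ ℝ, and define f(j) = β|j| + α|j − c| + (1/2)(j − y)² for j ∈ ℝ. If y + α + β ≤ 0, then the unique global minimizer of f over ℝ is j* = y + α + β. -/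
/-- A case of the closed-form solution Eq. (13) of the scalar subproblem
`min_j β|j| + α|j - c| + (1/2)(j - y)²`: under the stated conditions the unique
global minimizer is `j* = (y + α + β)`. -/
theorem scalar_subproblem_pos_neg (α β c y : ℝ) (hα : 0 < α) (hβ : 0 < β)
    (hc : 0 < c) (hy : y + α + β ≤ 0) :
    (∀ j : ℝ,
        β * |(y + α + β)| + α * |(y + α + β) - c| + (1 / 2) * ((y + α + β) - y) ^ 2 ≤
          β * |j| + α * |j - c| + (1 / 2) * (j - y) ^ 2) ∧
      ∀ j : ℝ,
        β * |j| + α * |j - c| + (1 / 2) * (j - y) ^ 2 ≤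
            β * |(y + α + β)| + α * |(y + α + β) - c| + (1 / 2) * ((y + α + β) - y) ^ 2 →
          j = (y + α + β) := by
  have h1 : |(y + α + β)| = -(y + α + β) := abs_of_nonpos hy
  have h2 : |(y + α + β) - c| = -((y + α + β) - c) := abs_of_nonpos (by linarith)
  have key : ∀ j : ℝ,
      β * |(y + α + β)| + α * |(y + α + β) - c| + (1 / 2) * ((y + α + β) - y) ^ 2
        + (1 / 2) * (j - (y + α + β)) ^ 2 ≤
      β * |j| + α * |j - c| + (1 / 2) * (j - y) ^ 2 := by
    intro j
    have a1 : -j ≤ |j| := neg_le_abs j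
    have a2 : -(j - c) ≤ |j - c| := neg_le_abs _
    rw [h1, h2]
    nlinarith [sq_nonneg (j - (y + α + β))]
  constructor
  · intro j
    have := key j
    nlinarith [sq_nonneg (j - (y + α + β))]
  · intro j hle
    have hk := key j
    have h3 : (j - (y + α + β)) ^ 2 = 0 := le_antisymm (by linarith) (sq_nonneg _)
    have := pow_eq_zero_iff (n := 2) (by norm_num) |>.mp h3
    linarith [sub_eq_zero.mp this]
end

section
/- Let α > 0, β > 0, c < 0, and y ∈ ℝ, and define f(j) = β|j| + α|j − c| + (1/2)(j − y)² for j ∈ ℝ. If y ≥ α + β, then the unique global minimizer of f over ℝ is j* = y − α − β. -/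
/-- A case of the closed-form solution Eq. (13) of the scalar subproblem
`min_j β|j| + α|j - c| + (1/2)(j - y)²`: under the stated conditions the unique
global minimizer is `j* = (y - α - β)`. -/
theorem scalar_subproblem_neg_large (α β c y : ℝ) (hα : 0 < α) (hβ : 0 < β)
    (hc : c < 0) (hy : α + β ≤ y) :
    (∀ j : ℝ,
        β * |(y - α - β)| + α * |(y - α - β) - c| + (1 / 2) * ((y - α - β) - y) ^ 2 ≤
          β * |j| + α * |j - c| + (1 / 2) * (j - y) ^ 2) ∧
      ∀ j : ℝ,
        β * |j| + α * |j - c| + (1 / 2) * (j - y) ^ 2 ≤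
            β * |(y - α - β)| + α * |(y - α - β) - c| + (1 / 2) * ((y - α - β) - y) ^ 2 →
          j = (y - α - β) := by
  have hs : (0:ℝ) ≤ y - α - β := by linarith
  have h1 : |(y - α - β)| = y - α - β := abs_of_nonneg hs
  have h2 : |(y - α - β) - c| = (y - α - β) - c := abs_of_nonneg (by linarith)
  constructor
  · intro j
    have hj1 : j ≤ |j| := le_abs_self j
    have hj2 : j - c ≤ |j - c| := le_abs_self _
    rw [h1, h2]
    nlinarith [sq_nonneg (j - (y - α - β))]
  · intro j hle
    have hj1 : j ≤ |j| := le_abs_self j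
    have hj2 : j - c ≤ |j - c| := le_abs_self _
    rw [h1, h2] at hle
    have hz : (j - (y - α - β)) ^ 2 ≤ 0 := by nlinarith
    have := sq_nonneg (j - (y - α - β))
    have : (j - (y - α - β)) ^ 2 = 0 := le_antisymm hz this
    have := pow_eq_zero_iff (n := 2) (by norm_num) |>.mp this
    linarith
end

section
/- Let α > 0, β > 0, c < 0, and y ∈ ℝ, and define f(j) = β|j| + α|j − c| + (1/2)(j − y)² for j ∈ ℝ. If c < y − α + β < 0, then the unique global minimizer of f over ℝ is j* = y − α + β. -/
/-- A case of the closed-form solution Eq. (13) of the scalar subproblem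
`min_j β|j| + α|j - c| + (1/2)(j - y)²`: under the stated conditions the unique
global minimizer is `j* = (y - α + β)`. -/
theorem scalar_subproblem_neg_mid (α β c y : ℝ) (hα : 0 < α) (hβ : 0 < β)
    (hc : c < 0) (hy1 : c < y - α + β) (hy2 : y - α + β < 0) :
    (∀ j : ℝ,
        β * |(y - α + β)| + α * |(y - α + β) - c| + (1 / 2) * ((y - α + β) - y) ^ 2 ≤
          β * |j| + α * |j - c| + (1 / 2) * (j - y) ^ 2) ∧
      ∀ j : ℝ,
        β * |j| + α * |j - c| + (1 / 2) * (j - y) ^ 2 ≤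
            β * |(y - α + β)| + α * |(y - α + β) - c| + (1 / 2) * ((y - α + β) - y) ^ 2 →
          j = (y - α + β) := by
  have h1 : |y - α + β| = -(y - α + β) := abs_of_neg hy2
  have h2 : |(y - α + β) - c| = (y - α + β) - c := abs_of_pos (by linarith)
  constructor
  · intro j
    have h3 : -j ≤ |j| := neg_le_abs j
    have h4 : j - c ≤ |j - c| := le_abs_self _
    nlinarith [sq_nonneg (j - (y - α + β))]
  · intro j h
    have h3 : -j ≤ |j| := neg_le_abs j
    have h4 : j - c ≤ |j - c| := le_abs_self _
    nlinarith [sq_nonneg (j - (y - α + β))]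
end

section
/- Let α > 0, β > 0, c < 0, and y ∈ ℝ, and define f(j) = β|j| + α|j − c| + (1/2)(j − y)² for j ∈ ℝ. If y + α + β ≤ c, then the unique global minimizer of f over ℝ is j* = y + α + β. -/
/-- A case of the closed-form solution Eq. (13) of the scalar subproblem
`min_j β|j| + α|j - c| + (1/2)(j - y)²`: under the stated conditions the unique
global minimizer is `j* = (y + α + β)`. -/
theorem scalar_subproblem_neg_small (α β c y : ℝ) (hα : 0 < α) (hβ : 0 < β)
    (hc : c < 0) (hy : y + α + β ≤ c) :
    (∀ j : ℝ,
        β * |(y + α + β)| + α * |(y + α + β) - c| + (1 / 2) * ((y + α + β) - y) ^ 2 ≤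
          β * |j| + α * |j - c| + (1 / 2) * (j - y) ^ 2) ∧
      ∀ j : ℝ,
        β * |j| + α * |j - c| + (1 / 2) * (j - y) ^ 2 ≤
            β * |(y + α + β)| + α * |(y + α + β) - c| + (1 / 2) * ((y + α + β) - y) ^ 2 →
          j = (y + α + β) := by
  have h3 : |(y + α + β)| = -(y + α + β) := abs_of_nonpos (by linarith)
  have h4 : |(y + α + β) - c| = -((y + α + β) - c) := abs_of_nonpos (by linarith)
  constructor
  · intro j
    have h1 : -j ≤ |j| := neg_le_abs j
    have h2 : -(j - c) ≤ |j - c| := neg_le_abs _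
    nlinarith [sq_nonneg (j - (y + α + β))]
  · intro j hj
    have h1 : -j ≤ |j| := neg_le_abs j
    have h2 : -(j - c) ≤ |j - c| := neg_le_abs _
    have hsq : (j - (y + α + β)) ^ 2 = 0 :=
      le_antisymm (by nlinarith) (sq_nonneg _)
    have := pow_eq_zero_iff (n := 2) (by norm_num) |>.mp hsq
    linarith [this]
end

section
/- Let λ > 0, q ≥ 0, γ ≥ 0, let v ≥ 1 be an integer, and let a_1 ≤ a_2 ≤ ⋯ ≤ a_v be real numbers. Define g(c) = γq|c| + Σ_{i=1}^{v} 2λ|a_i − c| for c ∈ ℝ, and suppose 2vλ > γq. Then the index i₀ = ⌈(2vλ − γq)/(4λ)⌉ satisfies 1 ≤ i₀ ≤ v, and if a_{i₀} > 0, then c = a_{i₀} is a global minimizer of g over ℝ, i.e., g(a_{i₀}) ≤ g(c) for all c ∈ ℝ. -/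
/-- Positive case of the closed-form solution Eq. (21) of the consensus subproblem:
for `λ > 0`, `q ≥ 0`, `γ ≥ 0`, `v ≥ 1` views with sorted values
`a 0 ≤ ⋯ ≤ a (v-1)` (here `a idx` is the `(idx+1)`-th value, 1-based index `idx+1`),
if `2vλ > γq` then `i₀ = ⌈(2vλ - γq)/(4λ)⌉` satisfies `1 ≤ i₀ ≤ v`, and whenever the
value `a idx` at 1-based index `i₀` is positive, it globally minimizes
`g(c) = γq|c| + ∑ᵢ 2λ|aᵢ - c|`. -/
theorem consensus_positive_case (lam q γ : ℝ) (hlam : 0 < lam) (hq : 0 ≤ q)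
    (hγ : 0 ≤ γ) (v : ℕ) (hv : 1 ≤ v) (a : Fin v → ℝ) (ha : Monotone a)
    (h : γ * q < 2 * (v : ℝ) * lam) :
    (1 ≤ ⌈(2 * (v : ℝ) * lam - γ * q) / (4 * lam)⌉ ∧
        ⌈(2 * (v : ℝ) * lam - γ * q) / (4 * lam)⌉ ≤ (v : ℤ)) ∧
      ∀ idx : Fin v, (idx : ℤ) + 1 = ⌈(2 * (v : ℝ) * lam - γ * q) / (4 * lam)⌉ →
        0 < a idx →
        ∀ c : ℝ,
          γ * q * |a idx| + ∑ i, 2 * lam * |a i - a idx| ≤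
            γ * q * |c| + ∑ i, 2 * lam * |a i - c| := by
  have hγq : 0 ≤ γ * q := mul_nonneg hγ hq
  have h4 : (0:ℝ) < 4 * lam := by linarith
  have hv1 : (1:ℝ) ≤ (v:ℝ) := by exact_mod_cast hv
  set x := (2 * (v : ℝ) * lam - γ * q) / (4 * lam) with hxdef
  have hx0 : 0 < x := div_pos (by linarith) h4
  have hxv : x ≤ (v:ℝ) := by
    rw [div_le_iff₀ h4]; nlinarith
  constructor
  · refine ⟨Int.ceil_pos.mpr hx0, Int.ceil_le.mpr ?_⟩
    exact_mod_cast hxv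
  intro idx hidx hm c
  have hub : x ≤ (idx:ℝ) + 1 := by
    have h1 : x ≤ ((((idx:ℤ)+1) : ℤ) : ℝ) := by
      rw [hidx]; exact Int.le_ceil x
    push_cast at h1; linarith
  have hlb : (idx:ℝ) < x := by
    have h1 : ((⌈x⌉ : ℤ) : ℝ) < x + 1 := Int.ceil_lt_add_one x
    rw [← hidx] at h1; push_cast at h1; linarith
  have hA : 0 ≤ γ * q + 2 * lam * (2 * ((idx:ℝ)+1) - v) := by
    rw [div_le_iff₀ h4] at hub; nlinarith
  have hB : 0 < 2 * (v:ℝ) * lam - γ * q - 4 * lam * (idx:ℝ) := by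
    rw [hxdef, lt_div_iff₀ h4] at hlb; nlinarith
  set m := a idx with hmdef
  have habs_m : |m| = m := abs_of_pos hm
  -- card computations
  have hcard1 : (Finset.univ.filter (fun i : Fin v => i ≤ idx)).card = (idx:ℕ) + 1 := by
    rw [show (Finset.univ.filter (fun i : Fin v => i ≤ idx)) = Finset.Iic idx by
      ext i; simp]
    exact Fin.card_Iic idx
  have hcard2 : (Finset.univ.filter (fun i : Fin v => ¬ i ≤ idx)).card = v - ((idx:ℕ) + 1) := by
    have := Finset.card_filter_add_card_filter_not
      (s := (Finset.univ : Finset (Fin v))) (p := fun i => i ≤ idx)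
    simp only [Finset.card_univ, Fintype.card_fin] at this
    omega
  have hidxv : (idx:ℕ) + 1 ≤ v := idx.2
  -- sum of the signed constants
  have hsum : ∀ d : ℝ, ∑ i : Fin v, (if i ≤ idx then d else -d)
      = (((idx:ℕ):ℝ) + 1) * d - ((v:ℝ) - (((idx:ℕ):ℝ) + 1)) * d := by
    intro d
    rw [Finset.sum_ite, Finset.sum_const, Finset.sum_const, hcard1, hcard2]
    have : ((v - ((idx:ℕ)+1) : ℕ) : ℝ) = (v:ℝ) - (((idx:ℕ):ℝ) + 1) := by
      push_cast [Nat.cast_sub hidxv]; ring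
    rw [nsmul_eq_mul, nsmul_eq_mul, this]
    push_cast; ring
  rcases le_total m c with hcm | hcm
  · -- case m ≤ c
    have key : ∑ i : Fin v, (2 * lam * |a i - m|
        + (if i ≤ idx then 2 * lam * (c - m) else -(2 * lam * (c - m))))
        ≤ ∑ i, 2 * lam * |a i - c| := by
      apply Finset.sum_le_sum
      intro i _
      by_cases hi : i ≤ idx
      · simp only [hi, if_pos]
        have hai : a i ≤ m := ha hi
        have h1 : |a i - m| = m - a i := by rw [abs_of_nonpos (by linarith)]; ring
        have h2 : c - a i ≤ |a i - c| := by
          rw [abs_sub_comm]; exact le_abs_self _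
        nlinarith
      · simp only [hi, if_neg, not_false_iff]
        have h1 : |a i - m| ≤ |a i - c| + |c - m| := by
          calc |a i - m| = |(a i - c) + (c - m)| := by ring_nf
          _ ≤ |a i - c| + |c - m| := abs_add_le _ _
        have h2 : |c - m| = c - m := abs_of_nonneg (by linarith)
        rw [h2] at h1
        have h3 := mul_le_mul_of_nonneg_left h1 (show (0:ℝ) ≤ 2 * lam by linarith)
        linarith
    rw [Finset.sum_add_distrib, hsum] at key
    have hγc : γ * q * c ≤ γ * q * |c| := mul_le_mul_of_nonneg_left (le_abs_self c) hγq
    have hexp : -(γ * q * (c - m)) ≤ (((idx:ℕ):ℝ) + 1) * (2 * lam * (c - m))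
        - ((v:ℝ) - (((idx:ℕ):ℝ) + 1)) * (2 * lam * (c - m)) := by
      rw [← sub_nonneg]
      have hr : (((idx:ℕ):ℝ) + 1) * (2 * lam * (c - m))
          - ((v:ℝ) - (((idx:ℕ):ℝ) + 1)) * (2 * lam * (c - m)) - -(γ * q * (c - m))
          = (c - m) * (γ * q + 2 * lam * (2 * (((idx:ℕ):ℝ) + 1) - v)) := by ring
      rw [hr]
      exact mul_nonneg (by linarith) hA
    rw [habs_m]
    linarith [key, hγc, hexp]
  · -- case c ≤ m
    have key : ∑ i : Fin v, (2 * lam * |a i - m|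
        + (if i ≥ idx then 2 * lam * (m - c) else -(2 * lam * (m - c))))
        ≤ ∑ i, 2 * lam * |a i - c| := by
      apply Finset.sum_le_sum
      intro i _
      by_cases hi : i ≥ idx
      · simp only [hi, if_pos]
        have hai : m ≤ a i := ha hi
        have h1 : |a i - m| = a i - m := abs_of_nonneg (by linarith)
        have h2 : a i - c ≤ |a i - c| := le_abs_self _
        nlinarith
      · simp only [hi, if_neg, not_false_iff]
        have h1 : |a i - m| ≤ |a i - c| + |c - m| := by
          calc |a i - m| = |(a i - c) + (c - m)| := by ring_nf
          _ ≤ |a i - c| + |c - m| := abs_add_le _ _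
        have h2 : |c - m| = m - c := by rw [abs_of_nonpos (by linarith)]; ring
        rw [h2] at h1
        have h3 := mul_le_mul_of_nonneg_left h1 (show (0:ℝ) ≤ 2 * lam by linarith)
        linarith
    have hcard1' : (Finset.univ.filter (fun i : Fin v => i ≥ idx)).card = v - (idx:ℕ) := by
      rw [show (Finset.univ.filter (fun i : Fin v => i ≥ idx)) = Finset.Ici idx by
        ext i; simp]
      exact Fin.card_Ici idx
    have hcard2' : (Finset.univ.filter (fun i : Fin v => ¬ i ≥ idx)).card = (idx:ℕ) := by
      have := Finset.card_filter_add_card_filter_not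
        (s := (Finset.univ : Finset (Fin v))) (p := fun i => i ≥ idx)
      simp only [Finset.card_univ, Fintype.card_fin] at this
      omega
    have hsum' : ∑ i : Fin v, (if i ≥ idx then 2 * lam * (m - c) else -(2 * lam * (m - c)))
        = ((v:ℝ) - ((idx:ℕ):ℝ)) * (2 * lam * (m - c)) - ((idx:ℕ):ℝ) * (2 * lam * (m - c)) := by
      rw [Finset.sum_ite, Finset.sum_const, Finset.sum_const, hcard1', hcard2']
      have hiv : (idx:ℕ) ≤ v := le_of_lt idx.2
      have : ((v - (idx:ℕ) : ℕ) : ℝ) = (v:ℝ) - ((idx:ℕ):ℝ) := by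
        push_cast [Nat.cast_sub hiv]; ring
      rw [nsmul_eq_mul, nsmul_eq_mul, this]
      ring
    rw [Finset.sum_add_distrib, hsum'] at key
    have hγc : γ * q * (m - (m - c)) ≤ γ * q * |c| := by
      apply mul_le_mul_of_nonneg_left _ hγq
      have : m - (m - c) = c := by ring
      rw [this]; exact le_abs_self c
    have hexp : γ * q * (m - c) ≤ ((v:ℝ) - ((idx:ℕ):ℝ)) * (2 * lam * (m - c))
        - ((idx:ℕ):ℝ) * (2 * lam * (m - c)) := by
      rw [← sub_nonneg]
      have hr : ((v:ℝ) - ((idx:ℕ):ℝ)) * (2 * lam * (m - c))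
          - ((idx:ℕ):ℝ) * (2 * lam * (m - c)) - γ * q * (m - c)
          = (m - c) * (2 * (v:ℝ) * lam - γ * q - 4 * lam * ((idx:ℕ):ℝ)) := by ring
      rw [hr]
      exact mul_nonneg (by linarith) hB.le
    rw [habs_m]
    linarith [key, hγc, hexp]
end

section
/- Let λ > 0, q ≥ 0, γ ≥ 0, let v ≥ 1 be an integer, and let a_1 ≤ a_2 ≤ ⋯ ≤ a_v be real numbers. Define g(c) = γq|c| + Σ_{i=1}^{v} 2λ|a_i − c| for c ∈ ℝ, and suppose 2vλ > γq. Then the index i₁ = ⌈(2vλ + γq)/(4λ)⌉ satisfies 1 ≤ i₁ ≤ v, and if a_{i₁} < 0, then c = a_{i₁} is a global minimizer of g over ℝ, i.e., g(a_{i₁}) ≤ g(c) for all c ∈ ℝ. -/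

lemma sum_if_lt (v : ℕ) (k : Fin v) :
    ∑ i : Fin v, (if i < k then (-1:ℝ) else 1) = (v:ℝ) - 2 * (k:ℕ) := by
  rw [Finset.sum_ite, Finset.sum_const, Finset.sum_const, Finset.filter_gt_eq_Iio,
    Finset.filter_not, Finset.filter_gt_eq_Iio, Fin.card_Iio,
    Finset.card_sdiff_of_subset (Finset.subset_univ _), Fin.card_Iio, Finset.card_univ, Fintype.card_fin]
  simp only [nsmul_eq_mul, mul_neg_one, mul_one]
  rw [Nat.cast_sub (by omega : (k:ℕ) ≤ v)]
  ring

lemma sum_if_le (v : ℕ) (k : Fin v) :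
    ∑ i : Fin v, (if i ≤ k then (-1:ℝ) else 1) = (v:ℝ) - 2 * ((k:ℕ) + 1) := by
  rw [Finset.sum_ite, Finset.sum_const, Finset.sum_const, Finset.filter_ge_eq_Iic,
    Finset.filter_not, Finset.filter_ge_eq_Iic, Fin.card_Iic,
    Finset.card_sdiff_of_subset (Finset.subset_univ _), Fin.card_Iic, Finset.card_univ, Fintype.card_fin]
  simp only [nsmul_eq_mul, mul_neg_one, mul_one]
  rw [Nat.cast_sub (by omega : (k:ℕ) + 1 ≤ v)]
  push_cast
  ring

lemma consensus_helper (lam q γ : ℝ) (hlam : 0 < lam) (hq : 0 ≤ q) (hγ : 0 ≤ γ)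
    (v : ℕ) (a : Fin v → ℝ) (m c : ℝ) (hm : m < 0)
    (s : Fin v → ℝ)
    (hs : ∀ i, (s i = 1 ∧ m ≤ a i) ∨ (s i = -1 ∧ a i ≤ m))
    (hK : 0 ≤ (m - c) * (γ * q + 2 * lam * ∑ i, s i)) :
    γ * q * |m| + ∑ i, 2 * lam * |a i - m| ≤ γ * q * |c| + ∑ i, 2 * lam * |a i - c| := by
  have h1 : ∀ i ∈ Finset.univ, 2 * lam * |a i - m| + 2 * lam * s i * (m - c)
      ≤ 2 * lam * |a i - c| := by
    intro i _
    rcases hs i with ⟨h1, h2⟩ | ⟨h1, h2⟩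
    · have := le_abs_self (a i - c)
      rw [h1, abs_of_nonneg (by linarith : (0:ℝ) ≤ a i - m)]
      nlinarith
    · have := neg_abs_le (a i - c)
      rw [h1, abs_of_nonpos (by linarith : a i - m ≤ 0)]
      nlinarith
  have h2 := Finset.sum_le_sum h1
  rw [Finset.sum_add_distrib] at h2
  have h3 : ∑ i, 2 * lam * s i * (m - c) = (2 * lam * ∑ i, s i) * (m - c) := by
    rw [Finset.mul_sum, Finset.sum_mul]
  rw [h3] at h2
  have h4 : γ * q * |m| + γ * q * (m - c) ≤ γ * q * |c| := by
    rw [abs_of_neg hm]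
    nlinarith [neg_le_abs c, mul_nonneg (mul_nonneg hγ hq) (by linarith [neg_le_abs c] : (0:ℝ) ≤ |c| + c)]
  nlinarith [h2]

/-- Negative case of the closed-form solution Eq. (21) of the consensus subproblem:
for `λ > 0`, `q ≥ 0`, `γ ≥ 0`, `v ≥ 1` views with sorted values
`a 0 ≤ ⋯ ≤ a (v-1)` (here `a idx` is the `(idx+1)`-th value, 1-based index `idx+1`),
if `2vλ > γq` then `i₁ = ⌈(2vλ + γq)/(4λ)⌉` satisfies `1 ≤ i₁ ≤ v`, and whenever the
value `a idx` at 1-based index `i₁` is negative, it globally minimizes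
`g(c) = γq|c| + ∑ᵢ 2λ|aᵢ - c|`. -/
theorem consensus_negative_case (lam q γ : ℝ) (hlam : 0 < lam) (hq : 0 ≤ q)
    (hγ : 0 ≤ γ) (v : ℕ) (hv : 1 ≤ v) (a : Fin v → ℝ) (ha : Monotone a)
    (h : γ * q < 2 * (v : ℝ) * lam) :
    (1 ≤ ⌈(2 * (v : ℝ) * lam + γ * q) / (4 * lam)⌉ ∧
        ⌈(2 * (v : ℝ) * lam + γ * q) / (4 * lam)⌉ ≤ (v : ℤ)) ∧
      ∀ idx : Fin v, (idx : ℤ) + 1 = ⌈(2 * (v : ℝ) * lam + γ * q) / (4 * lam)⌉ →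
        a idx < 0 →
        ∀ c : ℝ,
          γ * q * |a idx| + ∑ i, 2 * lam * |a i - a idx| ≤
            γ * q * |c| + ∑ i, 2 * lam * |a i - c| := by
  set x := (2 * (v : ℝ) * lam + γ * q) / (4 * lam) with hxdef
  have h4 : (0:ℝ) < 4 * lam := by linarith
  have hxpos : 0 < x := div_pos (by nlinarith [mul_nonneg hγ hq]) h4
  have hI1 : 1 ≤ ⌈x⌉ := Int.ceil_pos.mpr hxpos
  have hxv : x ≤ (v:ℝ) := le_of_lt ((div_lt_iff₀ h4).mpr (by nlinarith [mul_nonneg hγ hq]))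
  have hI2 : ⌈x⌉ ≤ (v:ℤ) := Int.ceil_le.mpr (by exact_mod_cast hxv)
  refine ⟨⟨hI1, hI2⟩, ?_⟩
  intro idx hidx hneg c
  have hceil : ((idx:ℕ):ℝ) + 1 = (⌈x⌉:ℝ) := by exact_mod_cast hidx
  have hub : x ≤ ((idx:ℕ):ℝ) + 1 := by rw [hceil]; exact Int.le_ceil x
  have hlb : ((idx:ℕ):ℝ) < x := by
    have := Int.ceil_lt_add_one x
    rw [← hceil] at this
    linarith
  have hxmul : x * (4 * lam) = 2 * (v:ℝ) * lam + γ * q := div_mul_cancel₀ _ (ne_of_gt h4)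
  rcases le_total c (a idx) with hc | hc
  · apply consensus_helper lam q γ hlam hq hγ v a (a idx) c hneg
      (fun i => if i < idx then -1 else 1)
    · intro i
      by_cases hi : i < idx
      · right; exact ⟨if_pos hi, ha hi.le⟩
      · left; exact ⟨if_neg hi, ha (not_lt.mp hi)⟩
    · rw [sum_if_lt v idx]
      apply mul_nonneg (by linarith)
      nlinarith
  · apply consensus_helper lam q γ hlam hq hγ v a (a idx) c hneg
      (fun i => if i ≤ idx then -1 else 1)
    · intro i
      by_cases hi : i ≤ idx
      · right; exact ⟨if_pos hi, ha hi⟩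
      · left; exact ⟨if_neg hi, ha (not_le.mp hi).le⟩
    · rw [sum_if_le v idx]
      have h5 : γ * q + 2 * lam * ((v:ℝ) - 2 * ((idx:ℕ) + 1)) ≤ 0 := by nlinarith
      nlinarith
end

section
/- Let M ∈ ℝ^{m×n}, A, S ∈ ℝ^{n×n}, δ ∈ ℝⁿ, and ρ > 0, and set K = MᵀM. Then the function h(C) = (1/2)‖M − MC‖_F² + (ρ/2)‖Cᵀ1 − 1 + δ/ρ‖₂² + (ρ/2)‖C − A + S/ρ‖_F², defined for C ∈ ℝ^{n×n}, has a unique global minimizer, namely C* = (K + ρI_n + ρ11ᵀ)⁻¹(K + ρ11ᵀ − 1δᵀ + ρA − S), where 1 ∈ ℝⁿ is the all-ones vector; here K + ρI_n + ρ11ᵀ is invertible. -/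
/-!
`h` is a quadratic function of `C`. Each of its three terms has the form `‖B C - E‖_F²`, with
`B = M`, `B = 1ᵀ` (the vector term read as a one-row matrix) and `B = I`. Expanding around `C*`,
the linear part is `tr(Gᵀ (C - C*))` with `G = P C* - (K + ρ11ᵀ - 1δᵀ + ρA - S)`, which vanishes
by the normal equation `P C* = K + ρ11ᵀ - 1δᵀ + ρA - S`. Hence, with `D = C - C*`,
`h C - h C* = ½‖M D‖² + ρ/2 ‖1ᵀD‖² + ρ/2 ‖D‖² ≥ ρ/2 ‖D‖²`, giving existence and uniqueness.
`P = MᵀM + ρI + ρ11ᵀ` is invertible since it is positive definite.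
-/

open Matrix

namespace Matrix

variable {l n p : Type*} [Fintype l] [Fintype n] [Fintype p]

theorem sum_sum_sq_eq_trace_transpose_mul_self (X : Matrix l p ℝ) :
    ∑ i, ∑ j, X i j ^ 2 = (Xᵀ * X).trace := by
  simp only [trace, diag, mul_apply, transpose_apply, sq]
  exact Finset.sum_comm

theorem sum_sq_eq_trace_replicateRow (v : p → ℝ) :
    ∑ j, v j ^ 2 = ((replicateRow Unit v)ᵀ * replicateRow Unit v).trace := by
  simp [dotProduct, sq]

theorem trace_transpose_mul_self_nonneg (X : Matrix l p ℝ) : 0 ≤ (Xᵀ * X).trace :=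
  (posSemidef_conjTranspose_mul_self X).trace_nonneg

theorem trace_transpose_mul_self_eq_zero_iff {X : Matrix l p ℝ} :
    (Xᵀ * X).trace = 0 ↔ X = 0 :=
  trace_conjTranspose_mul_self_eq_zero_iff

theorem trace_transpose_mul_self_mul_sub_expand (B : Matrix l n ℝ) (E : Matrix l p ℝ)
    (C C₀ : Matrix n p ℝ) :
    ((B * C - E)ᵀ * (B * C - E)).trace =
      ((B * C₀ - E)ᵀ * (B * C₀ - E)).trace + 2 * ((Bᵀ * (B * C₀ - E))ᵀ * (C - C₀)).trace +
        ((B * (C - C₀))ᵀ * (B * (C - C₀))).trace := by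
  have hsplit : B * C - E = (B * C₀ - E) + B * (C - C₀) := by rw [Matrix.mul_sub]; abel
  rw [hsplit]
  generalize B * C₀ - E = R
  generalize C - C₀ = D
  have hcross : (Bᵀ * R)ᵀ * D = Rᵀ * (B * D) := by
    rw [transpose_mul, transpose_transpose, Matrix.mul_assoc]
  have hswap : ((B * D)ᵀ * R).trace = (Rᵀ * (B * D)).trace := by
    rw [← trace_transpose, transpose_mul, transpose_transpose]
  rw [hcross, transpose_add, Matrix.add_mul, Matrix.mul_add, Matrix.mul_add]
  simp only [trace_add, hswap]
  ring

theorem posDef_transpose_mul_self_add_smul_one_add_smul_vecMulVec [DecidableEq n]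
    (M : Matrix l n ℝ) {ρ : ℝ} (hρ : 0 < ρ) :
    (Mᵀ * M + ρ • (1 : Matrix n n ℝ) + ρ • vecMulVec (1 : n → ℝ) 1).PosDef :=
  (PosDef.posSemidef_add (posSemidef_conjTranspose_mul_self M)
    (PosDef.one.smul hρ)).add_posSemidef ((posSemidef_vecMulVec_star_self _).smul hρ.le)

end Matrix

section CUpdate

variable {m n : Type*} [Fintype m] [Fintype n]

noncomputable def cUpdateObjective (M : Matrix m n ℝ) (A S : Matrix n n ℝ) (δ : n → ℝ) (ρ : ℝ)
    (C : Matrix n n ℝ) : ℝ :=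
  (1 / 2) * (∑ i, ∑ j, (M - M * C) i j ^ 2) +
    (ρ / 2) * (∑ i, ((Cᵀ *ᵥ fun _ => (1 : ℝ)) i - 1 + δ i / ρ) ^ 2) +
    (ρ / 2) * ∑ i, ∑ j, (C - A + ρ⁻¹ • S) i j ^ 2

variable [DecidableEq n] (M : Matrix m n ℝ) (A S : Matrix n n ℝ) (δ : n → ℝ) (ρ : ℝ)

/-- The factor `1 * C` puts the last term in the shape `B * C - E` of
`trace_transpose_mul_self_mul_sub_expand`. -/
theorem cUpdateObjective_eq_trace (C : Matrix n n ℝ) :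
    cUpdateObjective M A S δ ρ C =
      (1 / 2) * ((M * C - M)ᵀ * (M * C - M)).trace +
        (ρ / 2) * ((replicateRow Unit (1 : n → ℝ) * C - replicateRow Unit (1 - ρ⁻¹ • δ))ᵀ *
          (replicateRow Unit (1 : n → ℝ) * C - replicateRow Unit (1 - ρ⁻¹ • δ))).trace +
        (ρ / 2) * ((1 * C - (A - ρ⁻¹ • S))ᵀ * (1 * C - (A - ρ⁻¹ • S))).trace := by
  have hfirst : (M - M * C)ᵀ * (M - M * C) = (M * C - M)ᵀ * (M * C - M) := by
    rw [← neg_sub, transpose_neg, Matrix.neg_mul, Matrix.mul_neg, neg_neg]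
  have hsecond : (fun i => (Cᵀ *ᵥ fun _ => (1 : ℝ)) i - 1 + δ i / ρ) =
      (1 : n → ℝ) ᵥ* C - (1 - ρ⁻¹ • δ) := by
    ext i
    simp only [← Pi.one_def, mulVec_transpose, Pi.sub_apply, Pi.one_apply, Pi.smul_apply,
      smul_eq_mul]
    ring
  have hreplicate : replicateRow Unit ((1 : n → ℝ) ᵥ* C - (1 - ρ⁻¹ • δ)) =
      replicateRow Unit ((1 : n → ℝ) ᵥ* C) - replicateRow Unit (1 - ρ⁻¹ • δ) := rfl
  have hthird : C - A + ρ⁻¹ • S = 1 * C - (A - ρ⁻¹ • S) := by rw [Matrix.one_mul]; abel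
  rw [cUpdateObjective, sum_sum_sq_eq_trace_transpose_mul_self, hfirst,
    sum_sq_eq_trace_replicateRow (fun i => _), hsecond, hreplicate, replicateRow_vecMul,
    hthird, sum_sum_sq_eq_trace_transpose_mul_self]

theorem cUpdateObjective_eq_add_of_normal_eq (hρ : ρ ≠ 0) {C₀ : Matrix n n ℝ}
    (hC₀ : (Mᵀ * M + ρ • (1 : Matrix n n ℝ) + ρ • vecMulVec 1 1) * C₀ =
      Mᵀ * M + ρ • vecMulVec 1 1 - vecMulVec 1 δ + ρ • A - S) (C : Matrix n n ℝ) :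
    cUpdateObjective M A S δ ρ C = cUpdateObjective M A S δ ρ C₀ +
      ((1 / 2) * ((M * (C - C₀))ᵀ * (M * (C - C₀))).trace +
        (ρ / 2) * ((replicateRow Unit (1 : n → ℝ) * (C - C₀))ᵀ *
          (replicateRow Unit (1 : n → ℝ) * (C - C₀))).trace +
        (ρ / 2) * ((C - C₀)ᵀ * (C - C₀)).trace) := by
  have hgradient : Mᵀ * (M * C₀ - M) +
      ρ • ((replicateRow Unit (1 : n → ℝ))ᵀ *
        (replicateRow Unit (1 : n → ℝ) * C₀ - replicateRow Unit (1 - ρ⁻¹ • δ))) +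
      ρ • (1ᵀ * (1 * C₀ - (A - ρ⁻¹ • S))) = 0 := by
    rw [← sub_eq_zero.mpr hC₀]
    simp only [transpose_replicateRow, ← vecMulVec_eq, transpose_one, Matrix.one_mul,
      Matrix.mul_sub, Matrix.add_mul, Matrix.smul_mul, vecMulVec_sub, vecMulVec_smul, smul_sub,
      smul_smul, mul_inv_cancel₀ hρ, one_smul, ← Matrix.mul_assoc]
    abel
  have hcross := congrArg (fun G => (Gᵀ * (C - C₀)).trace) hgradient
  simp only [transpose_add, transpose_smul, Matrix.add_mul, Matrix.smul_mul, trace_add,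
    trace_smul, transpose_zero, Matrix.zero_mul, trace_zero, smul_eq_mul] at hcross
  rw [cUpdateObjective_eq_trace, cUpdateObjective_eq_trace,
    trace_transpose_mul_self_mul_sub_expand _ _ C C₀,
    trace_transpose_mul_self_mul_sub_expand _ _ C C₀,
    trace_transpose_mul_self_mul_sub_expand _ _ C C₀, Matrix.one_mul (C - C₀)]
  linear_combination hcross

theorem cUpdateObjective_add_le_of_normal_eq (hρ : 0 < ρ) {C₀ : Matrix n n ℝ}
    (hC₀ : (Mᵀ * M + ρ • (1 : Matrix n n ℝ) + ρ • vecMulVec 1 1) * C₀ =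
      Mᵀ * M + ρ • vecMulVec 1 1 - vecMulVec 1 δ + ρ • A - S) (C : Matrix n n ℝ) :
    cUpdateObjective M A S δ ρ C₀ + (ρ / 2) * ((C - C₀)ᵀ * (C - C₀)).trace ≤
      cUpdateObjective M A S δ ρ C := by
  rw [cUpdateObjective_eq_add_of_normal_eq M A S δ ρ hρ.ne' hC₀ C]
  have hdata := trace_transpose_mul_self_nonneg (M * (C - C₀))
  have hsums := trace_transpose_mul_self_nonneg (replicateRow Unit (1 : n → ℝ) * (C - C₀))
  nlinarith

end CUpdate

/-- The C-update (Eq. (14)–(15)): with `K = MᵀM`, the function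
`h(C) = (1/2)‖M - MC‖_F² + (ρ/2)‖Cᵀ1 - 1 + δ/ρ‖₂² + (ρ/2)‖C - A + S/ρ‖_F²`
has the unique global minimizer
`C* = (K + ρI + ρ11ᵀ)⁻¹ (K + ρ11ᵀ - 1δᵀ + ρA - S)`, the matrix
`K + ρI + ρ11ᵀ` being invertible. -/
theorem c_update_minimizer (m n : ℕ) (M : Matrix (Fin m) (Fin n) ℝ)
    (A S : Matrix (Fin n) (Fin n) ℝ) (δ : Fin n → ℝ) (ρ : ℝ) (hρ : 0 < ρ)
    (K : Matrix (Fin n) (Fin n) ℝ) (hK : K = Mᵀ * M)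
    (h : Matrix (Fin n) (Fin n) ℝ → ℝ)
    (hh : ∀ C, h C =
        (1 / 2) * (∑ i, ∑ j, (M - M * C) i j ^ 2) +
          (ρ / 2) * (∑ i, ((Cᵀ *ᵥ fun _ => (1 : ℝ)) i - 1 + δ i / ρ) ^ 2) +
          (ρ / 2) * ∑ i, ∑ j, (C - A + ρ⁻¹ • S) i j ^ 2)
    (P : Matrix (Fin n) (Fin n) ℝ)
    (hP : P = K + ρ • (1 : Matrix (Fin n) (Fin n) ℝ) +
        ρ • Matrix.vecMulVec (fun _ => (1 : ℝ)) fun _ => (1 : ℝ))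
    (Cstar : Matrix (Fin n) (Fin n) ℝ)
    (hCstar : Cstar = P⁻¹ *
        (K + ρ • Matrix.vecMulVec (fun _ => (1 : ℝ)) (fun _ => (1 : ℝ)) -
          Matrix.vecMulVec (fun _ => (1 : ℝ)) δ + ρ • A - S)) :
    IsUnit P ∧ (∀ C, h Cstar ≤ h C) ∧ ∀ C, h C ≤ h Cstar → C = Cstar := by
  subst hK hP
  obtain rfl : h = cUpdateObjective M A S δ ρ := funext hh
  have hPdef := posDef_transpose_mul_self_add_smul_one_add_smul_vecMulVec M hρ
  have hgrowth (C : Matrix (Fin n) (Fin n) ℝ) :=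
    cUpdateObjective_add_le_of_normal_eq M A S δ ρ hρ (C₀ := Cstar) (by
      rw [hCstar]
      exact mul_nonsing_inv_cancel_left _ _ (isUnit_iff_isUnit_det _ |>.mp hPdef.isUnit)) C
  refine ⟨hPdef.isUnit, fun C => ?_, fun C hC => ?_⟩
  · linarith [hgrowth C, mul_nonneg (half_pos hρ).le (trace_transpose_mul_self_nonneg (C - Cstar))]
  · have hdist : ((C - Cstar)ᵀ * (C - Cstar)).trace = 0 :=
      le_antisymm (by nlinarith [hgrowth C]) (trace_transpose_mul_self_nonneg _)
    exact sub_eq_zero.mp (trace_transpose_mul_self_eq_zero_iff.mp hdist)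
end
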